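/- Every P_6-free connected finite simple graph G with γ_t(G) ≥ 3 satisfies ct_{γ_t}(G) ≤ 2; that is, at most two edge contractions suffice to decrease the total domination number by one. -/

import Mathlib

open SimpleGraph

/-- `D` is a total dominating set of `G`: every vertex has a neighbour in `D`. -/
def IsTotalDomSet {V : Type*} (G : SimpleGraph V) (D : Set V) : Prop :=
  ∀ v : V, ∃ u ∈ D, G.Adj u v

/-- `x` and `y` are (distinct or not) at distance at most two:
adjacent or joined through a common neighbour. -/
def WithinTwo {V : Type*} (G : SimpleGraph V) (x y : V) : Prop :=
  G.Adj x y ∨ ∃ z, G.Adj x z ∧ G.Adj z y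

/-- `x` and `y` are at distance exactly two. -/
def DistTwo {V : Type*} (G : SimpleGraph V) (x y : V) : Prop :=
  x ≠ y ∧ ¬ G.Adj x y ∧ ∃ z, G.Adj x z ∧ G.Adj z y

/-- `D` is a semitotal dominating set of `G`: a dominating set in which every
vertex of `D` has another vertex of `D` within distance two (a witness). -/
def IsSemitotalDomSet {V : Type*} (G : SimpleGraph V) (D : Set V) : Prop :=
  (∀ v : V, v ∉ D → ∃ u ∈ D, G.Adj u v) ∧
  (∀ x ∈ D, ∃ y ∈ D, y ≠ x ∧ WithinTwo G x y)

/-- The total domination number `γ_t`. -/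
noncomputable def totalDomNum {V : Type*} (G : SimpleGraph V) [Fintype V] : ℕ :=
  sInf {n | ∃ D : Set V, IsTotalDomSet G D ∧ D.ncard = n}

/-- The semitotal domination number `γ_{t2}`. -/
noncomputable def semitotalDomNum {V : Type*} (G : SimpleGraph V) [Fintype V] : ℕ :=
  sInf {n | ∃ D : Set V, IsSemitotalDomSet G D ∧ D.ncard = n}

/-- The graph obtained from `G` by contracting the edge `xy`:
delete `y` and merge it into `x`. -/
def contractEdge {V : Type*} (G : SimpleGraph V) (x y : V) :
    SimpleGraph {v : V // v ≠ y} :=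
  SimpleGraph.fromRel (fun a b =>
    G.Adj a.1 b.1 ∨ (a.1 = x ∧ G.Adj y b.1) ∨ (b.1 = x ∧ G.Adj y a.1))

/-- A bundled finite simple graph. -/
structure FGraph : Type 1 where
  V : Type
  fin : Fintype V
  G : SimpleGraph V

attribute [instance] FGraph.fin

noncomputable def FGraph.tdn (A : FGraph) : ℕ := totalDomNum A.G

noncomputable def FGraph.stdn (A : FGraph) : ℕ := semitotalDomNum A.G

/-- `B` is obtained from `A` by contracting a single edge. -/
def FGraph.Contract (A B : FGraph) : Prop :=
  ∃ x y : A.V, A.G.Adj x y ∧ ∃ e : B.V ≃ {v : A.V // v ≠ y},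
    ∀ a b : B.V, B.G.Adj a b ↔ (contractEdge A.G x y).Adj (e a) (e b)

/-- `B` is obtained from `A` by a sequence of `n` edge contractions. -/
inductive ContractStar : ℕ → FGraph → FGraph → Prop
  | refl (A : FGraph) : ContractStar 0 A A
  | step {n : ℕ} {A B C : FGraph} : A.Contract B → ContractStar n B C →
      ContractStar (n + 1) A C

/-- At most `k` edge contractions suffice to decrease the total domination number by one. -/
def ctTDLe (A : FGraph) (k : ℕ) : Prop :=
  ∃ n ≤ k, ∃ B : FGraph, ContractStar n A B ∧ B.tdn = A.tdn - 1

/-- At most `k` edge contractions suffice to decrease the semitotal domination number by one. -/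
def ctSTLe (A : FGraph) (k : ℕ) : Prop :=
  ∃ n ≤ k, ∃ B : FGraph, ContractStar n A B ∧ B.stdn = A.stdn - 1

/-- `ct_{γ_t}`: the minimum number of edge contractions needed to decrease `γ_t` by one. -/
noncomputable def ctTDNum (A : FGraph) : ℕ :=
  sInf {n | ∃ B : FGraph, ContractStar n A B ∧ B.tdn = A.tdn - 1}

/-- `ct_{γ_{t2}}`: the minimum number of edge contractions needed to decrease `γ_{t2}` by one. -/
noncomputable def ctSTNum (A : FGraph) : ℕ :=
  sInf {n | ∃ B : FGraph, ContractStar n A B ∧ B.stdn = A.stdn - 1}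

/-- Disjoint union of two simple graphs. -/
def disjGraphUnion {α β : Type*} (G : SimpleGraph α) (H : SimpleGraph β) :
    SimpleGraph (α ⊕ β) :=
  SimpleGraph.fromRel (fun a b =>
    match a, b with
    | Sum.inl a, Sum.inl b => G.Adj a b
    | Sum.inr a, Sum.inr b => H.Adj a b
    | _, _ => False)

section Helpers

open Set

variable {V : Type*}

lemma tds_superset {G : SimpleGraph V} {D D' : Set V} (h : IsTotalDomSet G D)
    (hsub : D ⊆ D') : IsTotalDomSet G D' := fun v => by
  obtain ⟨u, hu, hadj⟩ := h v
  exact ⟨u, hsub hu, hadj⟩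

lemma tdn_le_ncard {G : SimpleGraph V} [Fintype V] {D : Set V}
    (h : IsTotalDomSet G D) : totalDomNum G ≤ D.ncard :=
  Nat.sInf_le ⟨D, h, rfl⟩

lemma exists_tdn_witness {G : SimpleGraph V} [Fintype V]
    (h : ∃ D : Set V, IsTotalDomSet G D) :
    ∃ D : Set V, IsTotalDomSet G D ∧ D.ncard = totalDomNum G := by
  obtain ⟨D, hD⟩ := h
  have hne : {n | ∃ D : Set V, IsTotalDomSet G D ∧ D.ncard = n}.Nonempty :=
    ⟨D.ncard, D, hD, rfl⟩
  have := Nat.sInf_mem hne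
  obtain ⟨D', hD', hcard⟩ := this
  exact ⟨D', hD', hcard⟩

lemma exists_tds_of_tdn_pos {G : SimpleGraph V} [Fintype V]
    (h : 0 < totalDomNum G) : ∃ D : Set V, IsTotalDomSet G D := by
  by_contra hno
  push_neg at hno
  have : {n | ∃ D : Set V, IsTotalDomSet G D ∧ D.ncard = n} = ∅ := by
    ext n; simp only [Set.mem_setOf_eq, Set.mem_empty_iff_false, iff_false]
    rintro ⟨D, hD, -⟩; exact hno D hD
  rw [totalDomNum, this] at h
  simp at h

lemma contractEdge_adj {G : SimpleGraph V} {x y : V} {a b : {v : V // v ≠ y}} :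
    (contractEdge G x y).Adj a b ↔ a ≠ b ∧
      (G.Adj a.1 b.1 ∨ (a.1 = x ∧ G.Adj y b.1) ∨ (b.1 = x ∧ G.Adj y a.1)) := by
  rw [contractEdge, SimpleGraph.fromRel_adj]
  constructor
  · rintro ⟨hne, (h | h) | (h | h)⟩
    · exact ⟨hne, Or.inl h⟩
    · exact ⟨hne, Or.inr h⟩
    · exact ⟨hne, Or.inl h.symm⟩
    · rcases h with h | h
      · exact ⟨hne, Or.inr (Or.inr h)⟩
      · exact ⟨hne, Or.inr (Or.inl h)⟩
  · rintro ⟨hne, h | h⟩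
    · exact ⟨hne, Or.inl (Or.inl h)⟩
    · exact ⟨hne, Or.inl (Or.inr h)⟩

end Helpers
section Contract

variable {V : Type*}

/-- If a total dominating set contains a (not necessarily induced) `P₃` `a-b-c`,
then after contracting the edge `bc` (deleting `c`), the trace of `S` is a
total dominating set of the contracted graph. -/
lemma contract_P3_tds {G : SimpleGraph V} {S : Set V} (hS : IsTotalDomSet G S)
    {a b c : V} (ha : a ∈ S) (hb : b ∈ S)
    (hab : G.Adj a b) (hbc : G.Adj b c) (hac : a ≠ c) :
    IsTotalDomSet (contractEdge G b c) {v : {v : V // v ≠ c} | v.1 ∈ S} := by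
  intro v
  obtain ⟨u, hu, hadj⟩ := hS v.1
  by_cases huc : u = c
  · subst huc
    by_cases hvb : v.1 = b
    · refine ⟨⟨a, hac⟩, ha, ?_⟩
      rw [contractEdge_adj]
      refine ⟨?_, Or.inl (hvb ▸ hab)⟩
      intro h; apply hab.ne; rw [← hvb]; exact congrArg Subtype.val h
    · refine ⟨⟨b, hbc.ne⟩, hb, ?_⟩
      rw [contractEdge_adj]
      exact ⟨fun h => hvb ((congrArg Subtype.val h).symm), Or.inr (Or.inl ⟨rfl, hadj⟩)⟩
  · refine ⟨⟨u, huc⟩, hu, ?_⟩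
    rw [contractEdge_adj]
    exact ⟨fun h => hadj.ne (congrArg Subtype.val h), Or.inl hadj⟩

lemma ncard_subtype_trace [Fintype V] (S : Set V) (c : V) :
    ({v : {v : V // v ≠ c} | v.1 ∈ S}).ncard = (S \ {c}).ncard := by
  classical
  have h1 : ({v : {v : V // v ≠ c} | v.1 ∈ S}).ncard
      = (Subtype.val '' {v : {v : V // v ≠ c} | v.1 ∈ S}).ncard :=
    (Set.ncard_image_of_injective _ Subtype.val_injective).symm
  rw [h1]
  congr 1
  ext w
  simp only [Set.mem_image, Set.mem_setOf_eq, Set.mem_diff, Set.mem_singleton_iff]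
  constructor
  · rintro ⟨⟨w', hw'⟩, hmem, rfl⟩; exact ⟨hmem, hw'⟩
  · rintro ⟨hw, hwc⟩; exact ⟨⟨w, hwc⟩, hw, rfl⟩

/-- Lifting lemma: from a total dominating set of the contracted graph, one of
size at most one more can be found in the original graph. -/
lemma lift_tds {G : SimpleGraph V} [Fintype V] {x y : V} (hxy : G.Adj x y)
    {D' : Set {v : V // v ≠ y}} (hD' : IsTotalDomSet (contractEdge G x y) D') :
    ∃ D : Set V, IsTotalDomSet G D ∧ D.ncard ≤ D'.ncard + 1 := by
  classical
  set S : Set V := Subtype.val '' D' with hSdef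
  have hScard : S.ncard = D'.ncard := Set.ncard_image_of_injective _ Subtype.val_injective
  have hdomS : ∀ v : V, v ≠ y → v ≠ x →
      ∃ u ∈ S, G.Adj u v ∨ (u = x ∧ G.Adj y v) := by
    intro v hvy hvx
    obtain ⟨u, hu, hadj⟩ := hD' ⟨v, hvy⟩
    rw [contractEdge_adj] at hadj
    rcases hadj.2 with h | ⟨h1, h2⟩ | ⟨h1, h2⟩
    · exact ⟨u.1, ⟨u, hu, rfl⟩, Or.inl h⟩
    · exact ⟨u.1, ⟨u, hu, rfl⟩, Or.inr ⟨h1, h2⟩⟩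
    · exact absurd h1 hvx
  by_cases hxS : x ∈ S
  · refine ⟨insert y S, ?_, ?_⟩
    · intro v
      by_cases hvy : v = y
      · exact ⟨x, Set.mem_insert_of_mem _ hxS, hvy ▸ hxy⟩
      by_cases hvx : v = x
      · exact ⟨y, Set.mem_insert _ _, hvx ▸ hxy.symm⟩
      obtain ⟨u, hu, h | ⟨h1, h2⟩⟩ := hdomS v hvy hvx
      · exact ⟨u, Set.mem_insert_of_mem _ hu, h⟩
      · exact ⟨y, Set.mem_insert _ _, h2⟩
    · calc (insert y S).ncard ≤ S.ncard + 1 := Set.ncard_insert_le _ _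
        _ = D'.ncard + 1 := by rw [hScard]
  · -- x ∉ S; find a dominator of x in the contracted graph
    obtain ⟨u, hu, hadj⟩ := hD' ⟨x, hxy.ne⟩
    rw [contractEdge_adj] at hadj
    have hux : u.1 ≠ x := fun h => hxS (h ▸ ⟨u, hu, rfl⟩)
    have hkey : G.Adj u.1 x ∨ G.Adj y u.1 := by
      rcases hadj.2 with h | ⟨h1, h2⟩ | ⟨h1, h2⟩
      · exact Or.inl h
      · exact absurd h1 hux
      · exact Or.inr h2
    have hdom' : ∀ v : V, v ≠ y → v ≠ x → ∃ u ∈ S, G.Adj u v := by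
      intro v hvy hvx
      obtain ⟨u', hu', h | ⟨h1, h2⟩⟩ := hdomS v hvy hvx
      · exact ⟨u', hu', h⟩
      · exact absurd (h1 ▸ hu') hxS
    rcases hkey with hk | hk
    · refine ⟨insert x S, ?_, ?_⟩
      · intro v
        by_cases hvy : v = y
        · exact ⟨x, Set.mem_insert _ _, hvy ▸ hxy⟩
        by_cases hvx : v = x
        · exact ⟨u.1, Set.mem_insert_of_mem _ ⟨u, hu, rfl⟩, hvx ▸ hk⟩
        obtain ⟨u', hu', h⟩ := hdom' v hvy hvx
        exact ⟨u', Set.mem_insert_of_mem _ hu', h⟩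
      · calc (insert x S).ncard ≤ S.ncard + 1 := Set.ncard_insert_le _ _
          _ = D'.ncard + 1 := by rw [hScard]
    · refine ⟨insert y S, ?_, ?_⟩
      · intro v
        by_cases hvy : v = y
        · exact ⟨u.1, Set.mem_insert_of_mem _ ⟨u, hu, rfl⟩, hvy ▸ hk.symm⟩
        by_cases hvx : v = x
        · exact ⟨y, Set.mem_insert _ _, hvx ▸ hxy.symm⟩
        obtain ⟨u', hu', h⟩ := hdom' v hvy hvx
        exact ⟨u', Set.mem_insert_of_mem _ hu', h⟩
      · calc (insert y S).ncard ≤ S.ncard + 1 := Set.ncard_insert_le _ _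
          _ = D'.ncard + 1 := by rw [hScard]

/-- The total domination number decreases by at most one under edge contraction. -/
lemma tdn_contract_lower {G : SimpleGraph V} [Fintype V] {x y : V}
    [Fintype {v : V // v ≠ y}] (hxy : G.Adj x y)
    (hne : ∃ D' : Set {v : V // v ≠ y}, IsTotalDomSet (contractEdge G x y) D') :
    totalDomNum G ≤ totalDomNum (contractEdge G x y) + 1 := by
  classical
  obtain ⟨D', hD', hcard⟩ := exists_tdn_witness hne
  obtain ⟨D, hD, hle⟩ := lift_tds hxy hD'
  calc totalDomNum G ≤ D.ncard := tdn_le_ncard hD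
    _ ≤ D'.ncard + 1 := hle
    _ = totalDomNum (contractEdge G x y) + 1 := by rw [hcard]

end Contract
section P6

variable {V : Type*}

set_option maxHeartbeats 1000000 in
lemma p6_embedding {G : SimpleGraph V} {x0 x1 x2 x3 x4 x5 : V}
    (a01 : G.Adj x0 x1) (a12 : G.Adj x1 x2) (a23 : G.Adj x2 x3)
    (a34 : G.Adj x3 x4) (a45 : G.Adj x4 x5)
    (n02 : ¬G.Adj x0 x2) (n03 : ¬G.Adj x0 x3) (n04 : ¬G.Adj x0 x4)
    (n05 : ¬G.Adj x0 x5) (n13 : ¬G.Adj x1 x3) (n14 : ¬G.Adj x1 x4)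
    (n15 : ¬G.Adj x1 x5) (n24 : ¬G.Adj x2 x4) (n25 : ¬G.Adj x2 x5)
    (n35 : ¬G.Adj x3 x5)
    (d02 : x0 ≠ x2) (d03 : x0 ≠ x3) (d04 : x0 ≠ x4) (d05 : x0 ≠ x5)
    (d13 : x1 ≠ x3) (d14 : x1 ≠ x4) (d15 : x1 ≠ x5)
    (d24 : x2 ≠ x4) (d25 : x2 ≠ x5) (d35 : x3 ≠ x5) :
    Nonempty (SimpleGraph.pathGraph 6 ↪g G) := by
  have d01 : x0 ≠ x1 := a01.ne
  have d12 : x1 ≠ x2 := a12.ne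
  have d23 : x2 ≠ x3 := a23.ne
  have d34 : x3 ≠ x4 := a34.ne
  have d45 : x4 ≠ x5 := a45.ne
  refine ⟨⟨⟨![x0, x1, x2, x3, x4, x5], ?_⟩, ?_⟩⟩
  · intro i j h
    fin_cases i <;> fin_cases j <;>
      simp only [Matrix.cons_val_zero, Matrix.cons_val_one, Matrix.head_cons,
        Matrix.cons_val_two, Matrix.tail_cons, Matrix.cons_val_three,
        Matrix.cons_val_four, Matrix.cons_val_succ] at h <;>
      first
        | rfl
        | exact absurd h d01 | exact absurd h d02 | exact absurd h d03
        | exact absurd h d04 | exact absurd h d05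
        | exact absurd h d12 | exact absurd h d13 | exact absurd h d14
        | exact absurd h d15
        | exact absurd h d23 | exact absurd h d24 | exact absurd h d25
        | exact absurd h d34 | exact absurd h d35 | exact absurd h d45
        | exact absurd h.symm d01 | exact absurd h.symm d02 | exact absurd h.symm d03
        | exact absurd h.symm d04 | exact absurd h.symm d05
        | exact absurd h.symm d12 | exact absurd h.symm d13 | exact absurd h.symm d14
        | exact absurd h.symm d15
        | exact absurd h.symm d23 | exact absurd h.symm d24 | exact absurd h.symm d25
        | exact absurd h.symm d34 | exact absurd h.symm d35 | exact absurd h.symm d45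
  · intro i j
    fin_cases i <;> fin_cases j <;>
      simp only [Matrix.cons_val_zero, Matrix.cons_val_one, Matrix.head_cons,
        Matrix.cons_val_two, Matrix.tail_cons, Matrix.cons_val_three,
        Matrix.cons_val_four, Matrix.cons_val_succ] <;>
      rw [SimpleGraph.pathGraph_adj] <;>
      norm_num <;>
      first
        | exact fun h => h.ne rfl
        | exact a01 | exact a12 | exact a23 | exact a34 | exact a45
        | exact a01.symm | exact a12.symm | exact a23.symm | exact a34.symm
        | exact a45.symm
        | exact n02 | exact n03 | exact n04 | exact n05 | exact n13 | exact n14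
        | exact n15 | exact n24 | exact n25 | exact n35
        | exact fun h => n02 h.symm | exact fun h => n03 h.symm
        | exact fun h => n04 h.symm | exact fun h => n05 h.symm
        | exact fun h => n13 h.symm | exact fun h => n14 h.symm
        | exact fun h => n15 h.symm | exact fun h => n24 h.symm
        | exact fun h => n25 h.symm | exact fun h => n35 h.symm

end P6
section FGraphPlumbing

/-- The bundled contraction of an edge of a bundled graph. -/
noncomputable def contractFG (A : FGraph) (x y : A.V) : FGraph :=
  ⟨{v : A.V // v ≠ y}, @Subtype.fintype _ _ (Classical.decPred _) A.fin,
    contractEdge A.G x y⟩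

lemma contractFG_contract (A : FGraph) {x y : A.V} (h : A.G.Adj x y) :
    A.Contract (contractFG A x y) :=
  ⟨x, y, h, Equiv.refl _, fun _ _ => Iff.rfl⟩

lemma totalDomNum_eq_of_instances {W : Type} (G : SimpleGraph W)
    (i1 i2 : Fintype W) : @totalDomNum W G i1 = @totalDomNum W G i2 := rfl

lemma contractFG_tdn (A : FGraph) (x y : A.V) :
    (contractFG A x y).tdn
      = @totalDomNum _ (contractEdge A.G x y)
          (@Subtype.fintype _ _ (Classical.decPred _) A.fin) := rfl

end FGraphPlumbing
section Assemble

lemma assembleA (A : FGraph) (h1 : 1 ≤ A.tdn)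
    {S : Set A.V} (hS : IsTotalDomSet A.G S) (hcard : S.ncard = A.tdn)
    {a b c : A.V} (ha : a ∈ S) (hb : b ∈ S) (hc : c ∈ S)
    (hab : A.G.Adj a b) (hbc : A.G.Adj b c) (hac : a ≠ c) :
    ctTDLe A 2 := by
  classical
  set B := contractFG A b c with hB
  have hcontract : A.Contract B := contractFG_contract A hbc
  have hS' : IsTotalDomSet B.G {v : {v : A.V // v ≠ c} | v.1 ∈ S} :=
    contract_P3_tds hS ha hb hab hbc hac
  have hcard' : ({v : {v : A.V // v ≠ c} | v.1 ∈ S}).ncard = A.tdn - 1 := by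
    rw [ncard_subtype_trace, Set.ncard_diff_singleton_of_mem hc, hcard]
  have hupper : B.tdn ≤ A.tdn - 1 := by
    have := @tdn_le_ncard _ B.G B.fin _ hS'
    exact this.trans_eq hcard'
  have hlower : A.tdn ≤ B.tdn + 1 :=
    @tdn_contract_lower _ A.G A.fin b c B.fin hbc ⟨_, hS'⟩
  exact ⟨1, by norm_num, B, ContractStar.step hcontract (ContractStar.refl B),
    by omega⟩

lemma assembleB (A : FGraph) (h3 : 3 ≤ A.tdn)
    {S : Set A.V} (hS : IsTotalDomSet A.G S) (hcard : S.ncard = A.tdn + 1)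
    {w x y z : A.V} (hw : w ∈ S) (hx : x ∈ S) (hy : y ∈ S) (hz : z ∈ S)
    (hwx : A.G.Adj w x) (hxy : A.G.Adj x y) (hyz : A.G.Adj y z)
    (hyw : y ≠ w) (hxz : x ≠ z) (hzw : z ≠ w) :
    ctTDLe A 2 := by
  classical
  have hxw : A.G.Adj x w := hwx.symm
  set B1 := contractFG A x w with hB1
  have hcontract1 : A.Contract B1 := contractFG_contract A hxw
  set S1 : Set B1.V := {v : {v : A.V // v ≠ w} | v.1 ∈ S} with hS1def
  have hS1 : IsTotalDomSet B1.G S1 :=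
    contract_P3_tds hS hy hx hxy.symm hxw hyw
  have hcard1 : S1.ncard = A.tdn := by
    rw [show S1.ncard = (S \ {w}).ncard from ncard_subtype_trace S w, Set.ncard_diff_singleton_of_mem hw, hcard]
    omega
  have hlower1 : A.tdn ≤ B1.tdn + 1 :=
    @tdn_contract_lower _ A.G A.fin x w B1.fin hxw ⟨_, hS1⟩
  by_cases hdone : B1.tdn = A.tdn - 1
  · exact ⟨1, by norm_num, B1, ContractStar.step hcontract1 (ContractStar.refl B1), hdone⟩
  · -- second contraction
    have ht1 : A.tdn ≤ B1.tdn := by omega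
    set xh : B1.V := ⟨x, hxw.ne⟩ with hxh
    set yh : B1.V := ⟨y, hyw⟩ with hyh
    set zh : B1.V := ⟨z, hzw⟩ with hzh
    have adjxy : B1.G.Adj xh yh := by
      show (contractEdge A.G x w).Adj xh yh
      rw [contractEdge_adj]
      exact ⟨fun h => hxy.ne (congrArg Subtype.val h), Or.inl hxy⟩
    have adjyz : B1.G.Adj yh zh := by
      show (contractEdge A.G x w).Adj yh zh
      rw [contractEdge_adj]
      exact ⟨fun h => hyz.ne (congrArg Subtype.val h), Or.inl hyz⟩
    set B2 := contractFG B1 yh zh with hB2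
    have hcontract2 : B1.Contract B2 := contractFG_contract B1 adjyz
    have hxz' : xh ≠ zh := fun h => hxz (congrArg Subtype.val h)
    have hS2 : IsTotalDomSet B2.G {v : {v : B1.V // v ≠ zh} | v.1 ∈ S1} :=
      contract_P3_tds hS1 hx hy adjxy adjyz hxz'
    have hcard2 : ({v : {v : B1.V // v ≠ zh} | v.1 ∈ S1}).ncard = A.tdn - 1 := by
      rw [@ncard_subtype_trace B1.V B1.fin S1 zh,
        Set.ncard_diff_singleton_of_mem (show zh ∈ S1 from hz), hcard1]
    have hupper2 : B2.tdn ≤ A.tdn - 1 := by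
      have := @tdn_le_ncard _ B2.G B2.fin _ hS2
      exact this.trans_eq hcard2
    have hlower2 : B1.tdn ≤ B2.tdn + 1 :=
      @tdn_contract_lower _ B1.G B1.fin yh zh B2.fin adjyz ⟨_, hS2⟩
    exact ⟨2, le_refl 2, B2,
      ContractStar.step hcontract1 (ContractStar.step hcontract2 (ContractStar.refl B2)),
      by omega⟩

end Assemble
section Key

open SimpleGraph

lemma key (A : FGraph) (hfree : ¬ Nonempty (SimpleGraph.pathGraph 6 ↪g A.G))
    (hc : A.G.Connected) (h3 : 3 ≤ A.tdn) :
    (∃ S : Set A.V, IsTotalDomSet A.G S ∧ S.ncard = A.tdn ∧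
      ∃ a b c, a ∈ S ∧ b ∈ S ∧ c ∈ S ∧ A.G.Adj a b ∧ A.G.Adj b c ∧ a ≠ c) ∨
    (∃ S : Set A.V, IsTotalDomSet A.G S ∧ S.ncard = A.tdn + 1 ∧
      ∃ w x y z, w ∈ S ∧ x ∈ S ∧ y ∈ S ∧ z ∈ S ∧
        A.G.Adj w x ∧ A.G.Adj x y ∧ A.G.Adj y z ∧ y ≠ w ∧ x ≠ z ∧ z ≠ w) := by
  classical
  set V := A.V
  set G := A.G with hG
  have hγ : A.tdn = totalDomNum G := rfl
  -- a minimum total dominating set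
  have hex : ∃ D : Set V, IsTotalDomSet G D :=
    exists_tds_of_tdn_pos (by omega)
  obtain ⟨D, hD, hDcard⟩ := exists_tdn_witness hex
  rw [← hγ] at hDcard
  -- Case A : some vertex of D has two distinct neighbours in D
  by_cases hP3 : ∃ b ∈ D, ∃ a ∈ D, ∃ c ∈ D, G.Adj a b ∧ G.Adj b c ∧ a ≠ c
  · left
    obtain ⟨b, hb, a, ha, c, hcm, h1, h2, h3'⟩ := hP3
    exact ⟨D, hD, hDcard, a, b, c, ha, hb, hcm, h1, h2, h3'⟩
  right
  have hU : ∀ b ∈ D, ∀ a ∈ D, ∀ c ∈ D, G.Adj a b → G.Adj b c → a = c := by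
    intro b hb a ha c hcm h1 h2
    by_contra hne
    exact hP3 ⟨b, hb, a, ha, c, hcm, h1, h2, hne⟩
  -- the set of lengths of walks joining "cross" vertices of D
  set T : Set ℕ := {n | ∃ u ∈ D, ∃ w ∈ D, u ≠ w ∧ ¬G.Adj u w ∧
    ∃ p : G.Walk u w, p.length = n} with hT
  have hTne : T.Nonempty := by
    have hDne : D.Nonempty := Set.nonempty_of_ncard_ne_zero (by omega)
    obtain ⟨a0, ha0⟩ := hDne
    obtain ⟨b0, hb0, hb0a0⟩ := hD a0
    have hsub : ({a0, b0} : Set V) ⊆ D := by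
      intro v hv; rcases hv with rfl | rfl
      · exact ha0
      · exact hb0
    have hcard2 : ({a0, b0} : Set V).ncard ≤ 2 := by
      calc ({a0, b0} : Set V).ncard ≤ ({b0} : Set V).ncard + 1 := Set.ncard_insert_le _ _
        _ ≤ 2 := by rw [Set.ncard_singleton]
    have hdiff : (D \ {a0, b0}).ncard ≠ 0 := by
      rw [Set.ncard_diff hsub]
      omega
    obtain ⟨c0, hc0⟩ := Set.nonempty_of_ncard_ne_zero hdiff
    have hc0D : c0 ∈ D := hc0.1
    have hc0a0 : c0 ≠ a0 := fun h => hc0.2 (by rw [h]; left; rfl)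
    have hc0b0 : c0 ≠ b0 := fun h => hc0.2 (by rw [h]; right; rfl)
    have hnadj : ¬G.Adj a0 c0 := by
      intro h
      exact hc0b0 (hU a0 ha0 b0 hb0 c0 hc0D hb0a0 h).symm
    obtain ⟨p⟩ := hc.preconnected a0 c0
    exact ⟨p.length, a0, ha0, c0, hc0D, fun h => hc0a0 h.symm, hnadj, p, rfl⟩
  set t := sInf T with ht
  have htT : t ∈ T := Nat.sInf_mem hTne
  have hTlb : ∀ u ∈ D, ∀ w ∈ D, u ≠ w → ¬G.Adj u w →
      ∀ p : G.Walk u w, t ≤ p.length :=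
    fun u hu w hw hne hnadj p => Nat.sInf_le ⟨u, hu, w, hw, hne, hnadj, p, rfl⟩
  obtain ⟨b, hbD, c, hcD, hbc_ne, hbc_nadj, p, hp⟩ := htT
  obtain ⟨a, haD, hab⟩ := hD b
  obtain ⟨d, hdD, hdc⟩ := hD c
  have hab_ne : a ≠ b := hab.ne
  have hdc_ne : d ≠ c := hdc.ne
  have hac_ne : a ≠ c := by
    intro h; subst h; exact hbc_nadj hab.symm
  have hbd_ne : b ≠ d := by
    intro h; subst h; exact hbc_nadj hdc
  have had_ne : a ≠ d := by
    intro h; subst h; exact hbc_ne (hU a haD b hbD c hcD hab.symm hdc)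
  have hnadj_ac : ¬G.Adj a c := fun h => hbc_ne (hU a haD b hbD c hcD hab.symm h)
  have hnadj_ad : ¬G.Adj a d := fun h => hbd_ne (hU a haD b hbD d hdD hab.symm h)
  have hnadj_bd : ¬G.Adj b d := fun h => had_ne (hU b hbD a haD d hdD hab h)
  have ht0 : t ≠ 0 := fun h => hbc_ne (p.eq_of_length_eq_zero (by rw [hp, h]))
  have ht1 : t ≠ 1 := fun h => hbc_nadj (p.adj_of_length_eq_one (by rw [hp, h]))
  have ht2 : 2 ≤ t := by omega
  -- destructure the walk twice
  cases p with
  | nil => exact absurd rfl hbc_ne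
  | cons h1 rest1 =>
    rename_i v1
    cases rest1 with
    | nil =>
      simp only [SimpleGraph.Walk.length_cons, SimpleGraph.Walk.length_nil] at hp
      omega
    | cons h2 rest2 =>
      rename_i v2
      simp only [SimpleGraph.Walk.length_cons] at hp
      -- v1 is not in D
      have hv1D : v1 ∉ D := by
        intro hv1
        by_cases hv1c : v1 = c
        · exact hbc_nadj (by rw [← hv1c]; exact h1)
        by_cases hv1adj : G.Adj v1 c
        · exact hbc_ne (hU v1 hv1 b hbD c hcD h1 hv1adj)
        have := hTlb v1 hv1 c hcD hv1c hv1adj (SimpleGraph.Walk.cons h2 rest2)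
        simp only [SimpleGraph.Walk.length_cons] at this
        omega
      by_cases ht2' : t = 2
      · -- distance-two case : D ∪ {v1} contains a P4  a-b-v1-c
        have hv2c : v2 = c := rest2.eq_of_length_eq_zero (by omega)
        refine ⟨insert v1 D, tds_superset hD (Set.subset_insert _ _), ?_,
          a, b, v1, c, Set.mem_insert_of_mem _ haD, Set.mem_insert_of_mem _ hbD,
          Set.mem_insert _ _, Set.mem_insert_of_mem _ hcD,
          hab, h1, (by rw [hv2c] at h2; exact h2), ?_, hbc_ne, hac_ne.symm⟩
        · rw [Set.ncard_insert_of_notMem hv1D, hDcard]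
        · intro h; rw [h] at hv1D; exact hv1D haD
      -- now t ≥ 3
      have ht3' : 3 ≤ t := by omega
      have hv2D : v2 ∉ D := by
        intro hv2
        by_cases hv2c : v2 = c
        · subst hv2c
          have := hTlb b hbD v2 hcD hbc_ne hbc_nadj
            (SimpleGraph.Walk.cons h1 (SimpleGraph.Walk.cons h2 SimpleGraph.Walk.nil))
          simp only [SimpleGraph.Walk.length_cons, SimpleGraph.Walk.length_nil] at this
          omega
        by_cases hv2adj : G.Adj v2 c
        · have hv2d : d = v2 := hU c hcD d hdD v2 hv2 hdc hv2adj.symm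
          subst hv2d
          have := hTlb b hbD d hdD hbd_ne hnadj_bd
            (SimpleGraph.Walk.cons h1 (SimpleGraph.Walk.cons h2 SimpleGraph.Walk.nil))
          simp only [SimpleGraph.Walk.length_cons, SimpleGraph.Walk.length_nil] at this
          omega
        have := hTlb v2 hv2 c hcD hv2c hv2adj rest2
        omega
      have hNv1 : ∀ u ∈ D, G.Adj u v1 → u = a ∨ u = b := by
        intro u hu hadj
        by_cases hub : u = b
        · exact Or.inr hub
        by_cases hub' : G.Adj u b
        · exact Or.inl (hU b hbD u hu a haD hub' hab.symm)
        have := hTlb u hu b hbD hub hub'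
          (SimpleGraph.Walk.cons hadj (SimpleGraph.Walk.cons h1.symm SimpleGraph.Walk.nil))
        simp only [SimpleGraph.Walk.length_cons, SimpleGraph.Walk.length_nil] at this
        omega
      have ht3 : t = 3 := by
        by_contra hne3
        have ht4 : 4 ≤ t := by omega
        obtain ⟨u, hu, hadj⟩ := hD v2
        have huab : u = a ∨ u = b := by
          by_cases hub : u = b
          · exact Or.inr hub
          by_cases hub' : G.Adj u b
          · exact Or.inl (hU b hbD u hu a haD hub' hab.symm)
          have := hTlb u hu b hbD hub hub'
            (SimpleGraph.Walk.cons hadj (SimpleGraph.Walk.cons h2.symm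
              (SimpleGraph.Walk.cons h1.symm SimpleGraph.Walk.nil)))
          simp only [SimpleGraph.Walk.length_cons, SimpleGraph.Walk.length_nil] at this
          omega
        have hunec : u ≠ c := by
          rcases huab with rfl | rfl
          · exact hac_ne
          · exact hbc_ne
        have hunadjc : ¬G.Adj u c := by
          rcases huab with rfl | rfl
          · exact hnadj_ac
          · exact hbc_nadj
        have := hTlb u hu c hcD hunec hunadjc (SimpleGraph.Walk.cons hadj rest2)
        simp only [SimpleGraph.Walk.length_cons] at this
        omega
      have hrest2len : rest2.length = 1 := by omega
      have h3' : G.Adj v2 c := rest2.adj_of_length_eq_one hrest2len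
      have hNv2 : ∀ u ∈ D, G.Adj u v2 → u = c ∨ u = d := by
        intro u hu hadj
        by_cases huc : u = c
        · exact Or.inl huc
        by_cases huc' : G.Adj u c
        · exact Or.inr (hU c hcD u hu d hdD huc' hdc.symm)
        have := hTlb u hu c hcD huc huc'
          (SimpleGraph.Walk.cons hadj (SimpleGraph.Walk.cons h3' SimpleGraph.Walk.nil))
        simp only [SimpleGraph.Walk.length_cons, SimpleGraph.Walk.length_nil] at this
        omega
      -- basic nonadjacencies
      have hav2 : ¬G.Adj a v2 := by
        intro h
        rcases hNv2 a haD h with h' | h'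
        · exact hac_ne h'
        · exact had_ne h'
      have hbv2 : ¬G.Adj b v2 := by
        intro h
        rcases hNv2 b hbD h with h' | h'
        · exact hbc_ne h'
        · exact hbd_ne h'
      have hv1c : ¬G.Adj v1 c := by
        intro h
        rcases hNv1 c hcD h.symm with h' | h'
        · exact hac_ne h'.symm
        · exact hbc_ne h'.symm
      have hv1d : ¬G.Adj v1 d := by
        intro h
        rcases hNv1 d hdD h.symm with h' | h'
        · exact had_ne h'.symm
        · exact hbd_ne h'.symm
      -- distinctness from non-membership in D
      have hv1a : v1 ≠ a := fun h => hv1D (by rw [h]; exact haD)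
      have hv1b : v1 ≠ b := fun h => hv1D (by rw [h]; exact hbD)
      have hv1cne : v1 ≠ c := fun h => hv1D (by rw [h]; exact hcD)
      have hv1dne : v1 ≠ d := fun h => hv1D (by rw [h]; exact hdD)
      have hv2a : v2 ≠ a := fun h => hv2D (by rw [h]; exact haD)
      have hv2b : v2 ≠ b := fun h => hv2D (by rw [h]; exact hbD)
      have hv2cne : v2 ≠ c := fun h => hv2D (by rw [h]; exact hcD)
      have hv2dne : v2 ≠ d := fun h => hv2D (by rw [h]; exact hdD)
      have hv1v2 : v1 ≠ v2 := h2.ne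
      -- swap on the a-side
      by_cases hbada : ∃ pp, (∀ u ∈ D, G.Adj u pp → u = a) ∧ ¬G.Adj v1 pp
      case neg =>
        push_neg at hbada
        set D1 : Set V := insert v1 (D \ {a}) with hD1def
        have hD1 : IsTotalDomSet G D1 := by
          intro v
          by_cases hall : ∀ u ∈ D, G.Adj u v → u = a
          · exact ⟨v1, Set.mem_insert _ _, hbada v hall⟩
          · push_neg at hall
            obtain ⟨u, hu, hadj, hune⟩ := hall
            exact ⟨u, Set.mem_insert_of_mem _ ⟨hu, hune⟩, hadj⟩
        have hv2D1 : v2 ∉ D1 := by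
          intro h
          rcases h with h | h
          · exact hv1v2 h.symm
          · exact hv2D h.1
        have hv1D1' : v1 ∉ D \ {a} := fun h => hv1D h.1
        refine ⟨insert v2 D1, tds_superset hD1 (Set.subset_insert _ _), ?_,
          b, v1, v2, c,
          Set.mem_insert_of_mem _ (Set.mem_insert_of_mem _ ⟨hbD, fun h => hab_ne h.symm⟩),
          Set.mem_insert_of_mem _ (Set.mem_insert _ _),
          Set.mem_insert _ _,
          Set.mem_insert_of_mem _ (Set.mem_insert_of_mem _ ⟨hcD, fun h => hac_ne h.symm⟩),
          h1, h2, h3', hv2b, hv1cne, hbc_ne.symm⟩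
        rw [Set.ncard_insert_of_notMem hv2D1, hD1def,
          Set.ncard_insert_of_notMem hv1D1', Set.ncard_diff_singleton_of_mem haD, hDcard]
        omega
      case pos =>
      obtain ⟨pp, hppD, hppv1⟩ := hbada
      have hpa : G.Adj a pp := by
        obtain ⟨u, hu, hadj⟩ := hD pp
        rw [← hppD u hu hadj]; exact hadj
      -- swap on the d-side
      by_cases hbadd : ∃ qq, (∀ u ∈ D, G.Adj u qq → u = d) ∧ ¬G.Adj v2 qq
      case neg =>
        push_neg at hbadd
        set D2 : Set V := insert v2 (D \ {d}) with hD2def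
        have hD2 : IsTotalDomSet G D2 := by
          intro v
          by_cases hall : ∀ u ∈ D, G.Adj u v → u = d
          · exact ⟨v2, Set.mem_insert _ _, hbadd v hall⟩
          · push_neg at hall
            obtain ⟨u, hu, hadj, hune⟩ := hall
            exact ⟨u, Set.mem_insert_of_mem _ ⟨hu, hune⟩, hadj⟩
        have hv1D2 : v1 ∉ D2 := by
          intro h
          rcases h with h | h
          · exact hv1v2 h
          · exact hv1D h.1
        have hv2D2' : v2 ∉ D \ {d} := fun h => hv2D h.1
        refine ⟨insert v1 D2, tds_superset hD2 (Set.subset_insert _ _), ?_,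
          c, v2, v1, b,
          Set.mem_insert_of_mem _ (Set.mem_insert_of_mem _ ⟨hcD, fun h => hdc_ne h.symm⟩),
          Set.mem_insert_of_mem _ (Set.mem_insert _ _),
          Set.mem_insert _ _,
          Set.mem_insert_of_mem _ (Set.mem_insert_of_mem _ ⟨hbD, hbd_ne⟩),
          h3'.symm, h2.symm, h1.symm, hv1cne, hv2b, hbc_ne⟩
        rw [Set.ncard_insert_of_notMem hv1D2, hD2def,
          Set.ncard_insert_of_notMem hv2D2', Set.ncard_diff_singleton_of_mem hdD, hDcard]
        omega
      case pos =>
      exfalso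
      obtain ⟨qq, hqqD, hqqv2⟩ := hbadd
      have hqd : G.Adj d qq := by
        obtain ⟨u, hu, hadj⟩ := hD qq
        rw [← hqqD u hu hadj]; exact hadj
      -- properties of pp
      have hpb : ¬G.Adj b pp := fun h => hab_ne (hppD b hbD h).symm
      have hpc : ¬G.Adj c pp := fun h => hac_ne (hppD c hcD h).symm
      have hpd : ¬G.Adj d pp := fun h => had_ne (hppD d hdD h).symm
      have hppa : pp ≠ a := hpa.ne'
      have hppb : pp ≠ b := fun h => hppv1 (by rw [h]; exact h1.symm)
      have hppc : pp ≠ c := fun h => hpd (by rw [h]; exact hdc)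
      have hppd : pp ≠ d := fun h => hnadj_ad (by rw [← h]; exact hpa)
      have hppv1ne : pp ≠ v1 := fun h => hpb (by rw [h]; exact h1)
      have hppv2 : pp ≠ v2 := fun h => hpc (by rw [h]; exact h3'.symm)
      -- properties of qq
      have hqa : ¬G.Adj a qq := fun h => had_ne (hqqD a haD h)
      have hqb : ¬G.Adj b qq := fun h => hbd_ne (hqqD b hbD h)
      have hqc : ¬G.Adj c qq := fun h => hdc_ne (hqqD c hcD h).symm
      have hqqd : qq ≠ d := hqd.ne'
      have hqqc : qq ≠ c := fun h => hqqv2 (by rw [h]; exact h3')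
      have hqqa : qq ≠ a := fun h => hnadj_ad (by rw [h] at hqd; exact hqd.symm)
      have hqqb : qq ≠ b := fun h => hnadj_bd (by rw [h] at hqd; exact hqd.symm)
      have hqqv1 : qq ≠ v1 := fun h => hbd_ne (hqqD b hbD (by rw [h]; exact h1))
      have hqqv2ne : qq ≠ v2 := fun h => hdc_ne (hqqD c hcD (by rw [h]; exact h3'.symm)).symm
      have hppqq : pp ≠ qq := fun h => had_ne (hqqD a haD (by rw [← h]; exact hpa))
      -- if pp and qq are adjacent we find an induced P6  b-a-pp-qq-d-c
      by_cases hpq : G.Adj pp qq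
      · exact hfree (p6_embedding hab.symm hpa hpq hqd.symm hdc
          hpb hqb hnadj_bd hbc_nadj hqa hnadj_ad hnadj_ac
          (fun h => hpd h.symm) (fun h => hpc h.symm) (fun h => hqc h.symm)
          hppb.symm hqqb.symm hbd_ne hbc_ne hqqa.symm had_ne hac_ne hppd hppc hqqc)
      by_cases hav1 : G.Adj a v1
      · by_cases hdv2 : G.Adj d v2
        · by_cases hpv2 : G.Adj pp v2
          · -- (4) : b-a-pp-v2-d-qq
            exact hfree (p6_embedding hab.symm hpa hpv2 hdv2.symm hqd
              hpb hbv2 hnadj_bd hqb hav2 hnadj_ad hqa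
              (fun h => hpd h.symm) hpq hqqv2
              hppb.symm hv2b.symm hbd_ne hqqb.symm hv2a.symm had_ne hqqa.symm
              hppd hppqq hqqv2ne.symm)
          · by_cases hqv1 : G.Adj qq v1
            · -- (5) : c-d-qq-v1-a-pp
              exact hfree (p6_embedding hdc.symm hqd hqv1 hav1.symm hpa
                hqc (fun h => hv1c h.symm) (fun h => hnadj_ac h.symm) hpc
                (fun h => hv1d h.symm) (fun h => hnadj_ad h.symm) hpd
                (fun h => hqa h.symm) (fun h => hpq h.symm) hppv1
                hqqc.symm hv1cne.symm hac_ne.symm hppc.symm hv1dne.symm had_ne.symm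
                hppd.symm hqqa hppqq.symm hppv1ne.symm)
            · -- (3) : pp-a-v1-v2-d-qq
              exact hfree (p6_embedding hpa.symm hav1 h2 hdv2.symm hqd
                (fun h => hppv1 h.symm) hpv2 (fun h => hpd h.symm) hpq
                hav2 hnadj_ad hqa hv1d (fun h => hqv1 h.symm) hqqv2
                hppv1ne hppv2 hppd hppqq hv2a.symm had_ne hqqa.symm
                hv1dne hqqv1.symm hqqv2ne.symm)
        · by_cases hqv1 : G.Adj qq v1
          · -- (5) again
            exact hfree (p6_embedding hdc.symm hqd hqv1 hav1.symm hpa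
              hqc (fun h => hv1c h.symm) (fun h => hnadj_ac h.symm) hpc
              (fun h => hv1d h.symm) (fun h => hnadj_ad h.symm) hpd
              (fun h => hqa h.symm) (fun h => hpq h.symm) hppv1
              hqqc.symm hv1cne.symm hac_ne.symm hppc.symm hv1dne.symm had_ne.symm
              hppd.symm hqqa hppqq.symm hppv1ne.symm)
          · -- (2) : qq-d-c-v2-v1-b
            exact hfree (p6_embedding hqd.symm hdc h3'.symm h2.symm h1.symm
              (fun h => hqc h.symm) (fun h => hqqv2 h.symm) (fun h => hqv1 h)
              (fun h => hqb h.symm) hdv2 (fun h => hv1d h.symm)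
              (fun h => hnadj_bd h.symm) (fun h => hv1c h.symm)
              (fun h => hbc_nadj h.symm) (fun h => hbv2 h.symm)
              hqqc hqqv2ne hqqv1 hqqb hv2dne.symm hv1dne.symm hbd_ne.symm
              hv1cne.symm hbc_ne.symm hv2b)
      · by_cases hdv2 : G.Adj d v2
        · by_cases hpv2 : G.Adj pp v2
          · -- (4) again
            exact hfree (p6_embedding hab.symm hpa hpv2 hdv2.symm hqd
              hpb hbv2 hnadj_bd hqb hav2 hnadj_ad hqa
              (fun h => hpd h.symm) hpq hqqv2
              hppb.symm hv2b.symm hbd_ne hqqb.symm hv2a.symm had_ne hqqa.symm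
              hppd hppqq hqqv2ne.symm)
          · -- (1) : pp-a-b-v1-v2-c
            exact hfree (p6_embedding hpa.symm hab h1 h2 h3'
              (fun h => hpb h.symm) (fun h => hppv1 h.symm) hpv2
              (fun h => hpc h.symm) hav1 hav2 hnadj_ac hbv2 hbc_nadj hv1c
              hppb hppv1ne hppv2 hppc hv1a.symm hv2a.symm hac_ne hv2b.symm
              hbc_ne hv1cne)
        · by_cases hpv2 : G.Adj pp v2
          · by_cases hqv1 : G.Adj qq v1
            · -- (6) : a-pp-v2-v1-qq-d
              exact hfree (p6_embedding hpa hpv2 h2.symm hqv1.symm hqd.symm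
                hav2 hav1 (fun h => hqa h) hnadj_ad
                (fun h => hppv1 h.symm) hpq (fun h => hpd h.symm)
                hqqv2 (fun h => hdv2 h.symm) hv1d
                hv2a.symm hv1a.symm hqqa.symm had_ne hppv1ne hppqq hppd
                hqqv2ne.symm hv2dne hv1dne)
            · -- (2) again
              exact hfree (p6_embedding hqd.symm hdc h3'.symm h2.symm h1.symm
                (fun h => hqc h.symm) (fun h => hqqv2 h.symm) (fun h => hqv1 h)
                (fun h => hqb h.symm) hdv2 (fun h => hv1d h.symm)
                (fun h => hnadj_bd h.symm) (fun h => hv1c h.symm)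
                (fun h => hbc_nadj h.symm) (fun h => hbv2 h.symm)
                hqqc hqqv2ne hqqv1 hqqb hv2dne.symm hv1dne.symm hbd_ne.symm
                hv1cne.symm hbc_ne.symm hv2b)
          · -- (1) again
            exact hfree (p6_embedding hpa.symm hab h1 h2 h3'
              (fun h => hpb h.symm) (fun h => hppv1 h.symm) hpv2
              (fun h => hpc h.symm) hav1 hav2 hnadj_ac hbv2 hbc_nadj hv1c
              hppb hppv1ne hppv2 hppc hv1a.symm hv2a.symm hac_ne hv2b.symm
              hbc_ne hv1cne)

end Key
/-- Every `P₆`-free connected graph with `γ_t ≥ 3` satisfies `ct_{γ_t} ≤ 2`. -/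
theorem stmt4 (A : FGraph) (hfree : ¬ Nonempty (SimpleGraph.pathGraph 6 ↪g A.G))
    (hc : A.G.Connected) (h3 : 3 ≤ A.tdn) :
    ctTDLe A 2 := by
  rcases key A hfree hc h3 with
      ⟨S, hS, hcard, a, b, c, ha, hb, hc', hab, hbc, hac⟩ |
      ⟨S, hS, hcard, w, x, y, z, hw, hx, hy, hz, hwx, hxy, hyz, hyw, hxz, hzw⟩
  · exact assembleA A (by omega) hS hcard ha hb hc' hab hbc hac
  · exact assembleB A h3 hS hcard hw hx hy hz hwx hxy hyz hyw hxz hzw
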